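/- Let y_F be the linear chain with nearest-neighbor spacing Fε, and suppose φ'(2F) ≥ 0 and φ''(2F) ≤ 0. Then for every u ∈ 𝒰, δ²E^a(y_F)[u,u] ≥ min{ φ''(F) + 4 φ''(2F), φ'(F)/F } ‖u'‖²_{ℓ²_ε}. Moreover, if N is even and C > 0, the zig-zag displacement û ∈ 𝒰 given by û_ℓ = ((−1)^ℓ) (0, C) satisfies δ²E^a(y_F)[û,û] = (φ'(F)/F) ‖û'‖²_{ℓ²_ε}. -/

import Mathlib

noncomputable section

open Real Finset

/-- Euclidean norm on `ℝ × ℝ`. -/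
def enorm2 (v : ℝ × ℝ) : ℝ := Real.sqrt (v.1 ^ 2 + v.2 ^ 2)

/-- Euclidean dot product on `ℝ × ℝ`. -/
def edot (v w : ℝ × ℝ) : ℝ := v.1 * w.1 + v.2 * w.2

/-- `N`-periodic mean-zero displacements (the space `𝒰`). -/
def IsDisp (N : ℕ) (u : ℤ → ℝ × ℝ) : Prop :=
  (∀ ℓ : ℤ, u (ℓ + (N : ℤ)) = u ℓ) ∧ ∑ ℓ ∈ Finset.Icc (1 : ℤ) (N : ℤ), u ℓ = 0

/-- Constrained displacements (the space `𝒰̃`): second component vanishes. -/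
def IsDisp1D (N : ℕ) (u : ℤ → ℝ × ℝ) : Prop :=
  IsDisp N u ∧ ∀ ℓ : ℤ, (u ℓ).2 = 0

/-- Backward difference `u'_ℓ = (u_ℓ - u_{ℓ-1})/ε`. -/
def bd (ε : ℝ) (u : ℤ → ℝ × ℝ) (ℓ : ℤ) : ℝ × ℝ := ε⁻¹ • (u ℓ - u (ℓ - 1))

/-- The inner product `⟨v,w⟩ = ε ∑_{ℓ=1}^N v_ℓ · w_ℓ`. -/
def ip (N : ℕ) (ε : ℝ) (v w : ℤ → ℝ × ℝ) : ℝ :=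
  ε * ∑ ℓ ∈ Finset.Icc (1 : ℤ) (N : ℤ), edot (v ℓ) (w ℓ)

/-- The norm `‖v‖_{ℓ²_ε}`. -/
def nrm (N : ℕ) (ε : ℝ) (v : ℤ → ℝ × ℝ) : ℝ :=
  Real.sqrt (ε * ∑ ℓ ∈ Finset.Icc (1 : ℤ) (N : ℤ), (enorm2 (v ℓ)) ^ 2)

/-- The atomistic energy `E^a`. -/
def Ea (N : ℕ) (ε : ℝ) (φ : ℝ → ℝ) (y : ℤ → ℝ × ℝ) : ℝ :=
  ε * ∑ ℓ ∈ Finset.Icc (1 : ℤ) (N : ℤ),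
    (φ (enorm2 (bd ε y ℓ)) + φ (enorm2 (bd ε y (ℓ + 1) + bd ε y ℓ)))

/-- The Cauchy–Born energy `E^CB`. -/
def ECB (N : ℕ) (ε : ℝ) (φ : ℝ → ℝ) (y : ℤ → ℝ × ℝ) : ℝ :=
  ε * ∑ ℓ ∈ Finset.Icc (1 : ℤ) (N : ℤ),
    (φ (enorm2 (bd ε y ℓ)) + φ (2 * enorm2 (bd ε y ℓ)))

/-- The bond-angle energy `E^b`. -/
def Eb (N : ℕ) (ε α : ℝ) (y : ℤ → ℝ × ℝ) : ℝ :=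
  ε * ∑ ℓ ∈ Finset.Icc (1 : ℤ) (N : ℤ),
    α * (1 - edot (bd ε y (ℓ + 1)) (bd ε y ℓ) /
      (enorm2 (bd ε y (ℓ + 1)) * enorm2 (bd ε y ℓ)))

/-- The quasi-nonlocal energy `E^QNL`. -/
def EQNL (N K : ℕ) (ε : ℝ) (φ : ℝ → ℝ) (y : ℤ → ℝ × ℝ) : ℝ :=
  ε * ∑ ℓ ∈ Finset.Icc (1 : ℤ) (N : ℤ), φ (enorm2 (bd ε y ℓ))
  + ε * ∑ ℓ ∈ Finset.Icc (1 : ℤ) (K : ℤ), φ (enorm2 (bd ε y (ℓ + 1) + bd ε y ℓ))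
  + ε * ∑ ℓ ∈ Finset.Icc ((K : ℤ) + 2) (N : ℤ), φ (2 * enorm2 (bd ε y ℓ))
  + ε / 2 * φ (2 * enorm2 (bd ε y 1)) + ε / 2 * φ (2 * enorm2 (bd ε y ((K : ℤ) + 1)))

/-- First variation `δE(y)[u] = (d/dt) E(y + t u) |_{t=0}`. -/
def dE (E : (ℤ → ℝ × ℝ) → ℝ) (y u : ℤ → ℝ × ℝ) : ℝ :=
  deriv (fun t : ℝ => E (fun ℓ => y ℓ + t • u ℓ)) 0

/-- Second variation `δ²E(y)[u,v] = (∂²/∂t∂s) E(y + t u + s v) |_{t=s=0}`. -/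
def d2E (E : (ℤ → ℝ × ℝ) → ℝ) (y u v : ℤ → ℝ × ℝ) : ℝ :=
  deriv (fun s : ℝ => deriv (fun t : ℝ => E (fun ℓ => y ℓ + t • u ℓ + s • v ℓ)) 0) 0

/-- The linear chain `y_{F,ℓ} = (Fεℓ, 0)`. -/
def yLin (ε F : ℝ) : ℤ → ℝ × ℝ := fun ℓ => (F * ε * ℓ, 0)

/-- The uniform circular chain of radius `R = Fε/(2 sin(πε))`. -/
def yCirc (ε F : ℝ) : ℤ → ℝ × ℝ := fun ℓ =>
  (F * ε / (2 * Real.sin (π * ε)) * Real.cos (2 * π * ε * ℓ),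
   F * ε / (2 * Real.sin (π * ε)) * Real.sin (2 * π * ε * ℓ))

/-!
Along the linear chain every nearest-neighbour bond is `(F, 0)` and every next-nearest one is
`(2F, 0)`. A bond `t ↦ φ(|(c, 0) + t a|)` has second derivative `φ''(c) a₁² + φ'(c)/c · a₂²` at
`t = 0`: stretching costs `φ''`, transverse displacement costs `φ'/c`. Hence
`δ²E^a(y_F)[u,u] = ε Σ_ℓ [B_F(u'_ℓ) + B_{2F}(u'_{ℓ+1} + u'_ℓ)]` with these quadratic forms `B_c`.
For `φ'(2F) ≥ 0` the transverse part of `B_{2F}` may be dropped, and for `φ''(2F) ≤ 0` the bound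
`(x + y)² ≤ 2x² + 2y²` together with periodicity turns the next-nearest neighbour terms into
`4 φ''(2F) Σ (u'_ℓ)₁²`. The zig-zag displacement is antiperiodic, hence so is its difference
quotient: `u'_{ℓ+1} + u'_ℓ = 0` and `u'` is purely transverse, so only `φ'(F)/F` survives.
-/

open Filter Topology

-- Asking for differentiability near `x` makes `deriv f` the genuine derivative there (it is `0`
-- wherever `f` is not differentiable).
def HasSecondDerivAt (f : ℝ → ℝ) (f'' x : ℝ) : Prop :=
  (∀ᶠ t in 𝓝 x, DifferentiableAt ℝ f t) ∧ HasDerivAt (deriv f) f'' x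

namespace HasSecondDerivAt

variable {f g : ℝ → ℝ} {f'' g'' x : ℝ}

theorem deriv_deriv (h : HasSecondDerivAt f f'' x) : deriv (deriv f) x = f'' := h.2.deriv

theorem add (hf : HasSecondDerivAt f f'' x) (hg : HasSecondDerivAt g g'' x) :
    HasSecondDerivAt (fun t => f t + g t) (f'' + g'') x := by
  have hd := hf.1.and hg.1
  refine ⟨hd.mono fun t ht => ht.1.add ht.2, ?_⟩
  exact (hf.2.add hg.2).congr_of_eventuallyEq (hd.mono fun t ht => deriv_add ht.1 ht.2)

theorem sum {ι : Type*} {s : Finset ι} {f : ι → ℝ → ℝ} {f'' : ι → ℝ}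
    (h : ∀ i ∈ s, HasSecondDerivAt (f i) (f'' i) x) :
    HasSecondDerivAt (fun t => ∑ i ∈ s, f i t) (∑ i ∈ s, f'' i) x := by
  have hd : ∀ᶠ t in 𝓝 x, ∀ i ∈ s, DifferentiableAt ℝ (f i) t :=
    (eventually_all_finset s).2 fun i hi => (h i hi).1
  refine ⟨hd.mono fun t ht => DifferentiableAt.fun_sum ht, ?_⟩
  exact (HasDerivAt.fun_sum fun i hi => (h i hi).2).congr_of_eventuallyEq
    (hd.mono fun t ht => deriv_fun_sum ht)

theorem comp {y : ℝ} (hf : HasSecondDerivAt f f'' y) (hg : HasSecondDerivAt g g'' x)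
    (hgx : g x = y) :
    HasSecondDerivAt (f ∘ g) (f'' * deriv g x ^ 2 + deriv f y * g'') x := by
  subst hgx
  have hgx : DifferentiableAt ℝ g x := hg.1.self_of_nhds
  have hd := (hgx.continuousAt.eventually hf.1).and hg.1
  refine ⟨hd.mono fun t ht => ht.1.comp t ht.2, ?_⟩
  have h := (hf.2.comp x hgx.hasDerivAt).mul hg.2
  refine (h.congr_deriv (by simp only [Function.comp_apply]; ring)).congr_of_eventuallyEq ?_
  exact hd.mono fun t ht => deriv_comp t ht.1 ht.2

end HasSecondDerivAt

theorem ContDiffOn.hasSecondDerivAt {f : ℝ → ℝ} {s : Set ℝ} {x : ℝ} (hf : ContDiffOn ℝ 2 f s)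
    (hs : IsOpen s) (hx : x ∈ s) : HasSecondDerivAt f (deriv (deriv f) x) x := by
  have hf' : ContDiffOn ℝ 1 (deriv f) s := hf.deriv_of_isOpen hs (by norm_num)
  refine ⟨?_, ((hf'.contDiffAt (hs.mem_nhds hx)).differentiableAt (by norm_num)).hasDerivAt⟩
  filter_upwards [hs.mem_nhds hx] with t ht
  exact (hf.contDiffAt (hs.mem_nhds ht)).differentiableAt (by norm_num)

lemma enorm2_sq (v : ℝ × ℝ) : enorm2 v ^ 2 = v.1 ^ 2 + v.2 ^ 2 :=
  Real.sq_sqrt (by positivity)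

lemma nrm_sq (N : ℕ) {ε : ℝ} (hε : 0 ≤ ε) (v : ℤ → ℝ × ℝ) :
    nrm N ε v ^ 2 = ε * ∑ ℓ ∈ Icc (1 : ℤ) N, ((v ℓ).1 ^ 2 + (v ℓ).2 ^ 2) := by
  rw [nrm, Real.sq_sqrt (by positivity)]
  simp only [enorm2_sq]

lemma enorm2_mk_zero {c : ℝ} (hc : 0 ≤ c) : enorm2 (c, 0) = c := by
  simp [enorm2, Real.sqrt_sq hc]

lemma hasDerivAt_enorm2_line (p a : ℝ × ℝ) {t : ℝ} (h : 0 < enorm2 (p + t • a)) :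
    HasDerivAt (fun s : ℝ => enorm2 (p + s • a)) (edot (p + t • a) a / enorm2 (p + t • a)) t := by
  have hfst : HasDerivAt (fun s : ℝ => p.1 + s * a.1) a.1 t := by
    simpa using ((hasDerivAt_id t).mul_const a.1).const_add p.1
  have hsnd : HasDerivAt (fun s : ℝ => p.2 + s * a.2) a.2 t := by
    simpa using ((hasDerivAt_id t).mul_const a.2).const_add p.2
  have hpos : 0 < (p.1 + t * a.1) ^ 2 + (p.2 + t * a.2) ^ 2 := by
    simpa [enorm2] using Real.sqrt_pos.1 h
  have hsq := ((hfst.fun_pow 2).fun_add (hsnd.fun_pow 2)).sqrt hpos.ne'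
  convert hsq using 1
  · simp [enorm2]
  · simp only [enorm2, edot, Prod.fst_add, Prod.snd_add, Prod.smul_fst, Prod.smul_snd, smul_eq_mul]
    field_simp
    ring

lemma hasDerivAt_edot_line (p a b : ℝ × ℝ) (t : ℝ) :
    HasDerivAt (fun s : ℝ => edot (p + s • a) b) (edot a b) t := by
  have h := ((hasDerivAt_id t).mul_const (edot a b)).const_add (edot p b)
  rw [one_mul] at h
  refine h.congr_of_eventuallyEq (Eventually.of_forall fun s => ?_)
  simp only [edot, Prod.fst_add, Prod.snd_add, Prod.smul_fst, Prod.smul_snd, smul_eq_mul, id]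
  ring

lemma hasSecondDerivAt_enorm2_line {c : ℝ} (hc : 0 < c) (a : ℝ × ℝ) :
    HasSecondDerivAt (fun t : ℝ => enorm2 ((c, 0) + t • a)) (a.2 ^ 2 / c) 0 := by
  have hn0 : enorm2 ((c, 0) + (0 : ℝ) • a) = c := by simp [enorm2_mk_zero hc.le]
  have hc0 : 0 < enorm2 ((c, 0) + (0 : ℝ) • a) := by rwa [hn0]
  have hpos : ∀ᶠ t in 𝓝 (0 : ℝ), 0 < enorm2 ((c, 0) + t • a) :=
    (hasDerivAt_enorm2_line (c, 0) a hc0).continuousAt.eventually (lt_mem_nhds hc0)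
  have hderiv := hpos.mono fun t ht => hasDerivAt_enorm2_line (c, 0) a ht
  refine ⟨hderiv.mono fun t ht => ht.differentiableAt, ?_⟩
  have hnum := hasDerivAt_edot_line (c, 0) a a 0
  refine ((hnum.div hderiv.self_of_nhds hc0.ne').congr_deriv ?_).congr_of_eventuallyEq
    (hderiv.mono fun t ht => ht.deriv)
  simp only [edot, zero_smul, add_zero, enorm2_mk_zero hc.le, zero_mul]
  field_simp
  ring

def bondEnergy (φ : ℝ → ℝ) (c : ℝ) (a : ℝ × ℝ) (t : ℝ) : ℝ :=
  φ (enorm2 ((c, 0) + t • a))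

def bondHessian (φ : ℝ → ℝ) (c : ℝ) (a : ℝ × ℝ) : ℝ :=
  deriv (deriv φ) c * a.1 ^ 2 + deriv φ c / c * a.2 ^ 2

lemma hasSecondDerivAt_bondEnergy {φ : ℝ → ℝ} (hφ : ContDiffOn ℝ 2 φ (Set.Ioi 0)) {c : ℝ}
    (hc : 0 < c) (a : ℝ × ℝ) : HasSecondDerivAt (bondEnergy φ c a) (bondHessian φ c a) 0 := by
  have hslope : deriv (fun t : ℝ => enorm2 ((c, 0) + t • a)) 0 = a.1 := by
    rw [(hasDerivAt_enorm2_line (c, 0) a (by simpa [enorm2_mk_zero hc.le])).deriv]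
    simp [edot, enorm2_mk_zero hc.le, hc.ne']
  have h := (hφ.hasSecondDerivAt isOpen_Ioi hc).comp (hasSecondDerivAt_enorm2_line hc a)
    (by simp [enorm2_mk_zero hc.le])
  rw [hslope] at h
  rwa [show bondHessian φ c a = deriv (deriv φ) c * a.1 ^ 2 + deriv φ c * (a.2 ^ 2 / c) by
    unfold bondHessian; ring]

lemma bd_yLin_add_smul {ε : ℝ} (hε : ε ≠ 0) (F t : ℝ) (u : ℤ → ℝ × ℝ) (ℓ : ℤ) :
    bd ε (fun m => yLin ε F m + t • u m) ℓ = (F, 0) + t • bd ε u ℓ := by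
  ext
  · simp only [bd, yLin, Int.cast_sub, Int.cast_one, Prod.smul_fst, Prod.fst_sub, Prod.fst_add,
      smul_eq_mul]
    field_simp
    ring
  · simp only [bd, yLin, Prod.smul_snd, Prod.snd_sub, Prod.snd_add, smul_eq_mul, zero_add]
    ring

lemma Ea_yLin_add_smul (N : ℕ) {ε : ℝ} (hε : ε ≠ 0) (φ : ℝ → ℝ) (F t : ℝ) (u : ℤ → ℝ × ℝ) :
    Ea N ε φ (fun ℓ => yLin ε F ℓ + t • u ℓ) =
      ε * ∑ ℓ ∈ Icc (1 : ℤ) N, (bondEnergy φ F (bd ε u ℓ) t +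
        bondEnergy φ (2 * F) (bd ε u (ℓ + 1) + bd ε u ℓ) t) := by
  simp only [Ea, bd_yLin_add_smul hε, bondEnergy]
  congr 3 with ℓ
  congr 3
  ext
  · simp only [Prod.fst_add, Prod.smul_fst, smul_eq_mul, smul_add]
    ring
  · simp

lemma d2E_self_eq_deriv_deriv (E : (ℤ → ℝ × ℝ) → ℝ) (y u : ℤ → ℝ × ℝ) :
    d2E E y u u = deriv (deriv fun t : ℝ => E fun ℓ => y ℓ + t • u ℓ) 0 := by
  set g : ℝ → ℝ := fun t => E fun ℓ => y ℓ + t • u ℓ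
  unfold d2E
  congr 1
  funext s
  have hshift : (fun t : ℝ => E fun ℓ => y ℓ + t • u ℓ + s • u ℓ) = fun t => g (t + s) := by
    simp only [g, add_smul, add_assoc]
  rw [hshift, deriv_comp_add_const, zero_add]

theorem d2E_Ea_yLin (N : ℕ) {ε : ℝ} (hε : ε ≠ 0) {φ : ℝ → ℝ}
    (hφ : ContDiffOn ℝ 2 φ (Set.Ioi 0)) {F : ℝ} (hF : 0 < F) (u : ℤ → ℝ × ℝ) :
    d2E (Ea N ε φ) (yLin ε F) u u = ε * ∑ ℓ ∈ Icc (1 : ℤ) N,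
      (bondHessian φ F (bd ε u ℓ) + bondHessian φ (2 * F) (bd ε u (ℓ + 1) + bd ε u ℓ)) := by
  have h := HasSecondDerivAt.sum fun ℓ (_ : ℓ ∈ Icc (1 : ℤ) N) =>
    (hasSecondDerivAt_bondEnergy hφ hF (bd ε u ℓ)).add
      (hasSecondDerivAt_bondEnergy hφ (c := 2 * F) (by positivity) (bd ε u (ℓ + 1) + bd ε u ℓ))
  simp only [d2E_self_eq_deriv_deriv, Ea_yLin_add_smul N hε, deriv_const_mul_field']
  rw [h.deriv_deriv]

theorem Function.Periodic.sum_Icc_add_one {M : Type*} [AddCancelCommMonoid M] {f : ℤ → M}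
    {N : ℕ} (hf : Function.Periodic f N) :
    ∑ ℓ ∈ Icc (1 : ℤ) N, f (ℓ + 1) = ∑ ℓ ∈ Icc (1 : ℤ) N, f ℓ := by
  rcases N.eq_zero_or_pos with rfl | hN
  · simp
  have hshift : ∑ ℓ ∈ Icc (1 : ℤ) N, f (ℓ + 1) = ∑ ℓ ∈ Icc (1 + 1 : ℤ) (N + 1), f ℓ := by
    rw [← map_add_right_Icc, sum_map]
    rfl
  have htop : ∑ ℓ ∈ Icc (1 : ℤ) (N + 1), f ℓ = f (N + 1) + ∑ ℓ ∈ Icc (1 : ℤ) N, f ℓ := by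
    rw [← insert_Icc_right_eq_Icc_add_one (by omega), sum_insert (by simp)]
  have hbot : ∑ ℓ ∈ Icc (1 : ℤ) (N + 1), f ℓ = f 1 + ∑ ℓ ∈ Icc (1 + 1 : ℤ) (N + 1), f ℓ := by
    rw [← insert_Icc_add_one_left_eq_Icc (by omega), sum_insert (by simp)]
  have hwrap : f (N + 1) = f 1 := by rw [add_comm]; exact hf 1
  rw [hshift]
  apply add_left_cancel (a := f 1)
  rw [← hbot, htop, hwrap]

lemma Function.Periodic.bd {u : ℤ → ℝ × ℝ} {c : ℤ} (hu : Function.Periodic u c) (ε : ℝ) :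
    Function.Periodic (bd ε u) c := fun ℓ => by
  simp only [_root_.bd, hu ℓ, show ℓ + c - 1 = ℓ - 1 + c by ring, hu (ℓ - 1)]

lemma bondHessian_add_ge {φ : ℝ → ℝ} {c : ℝ} (hc : 0 < c) (h1 : 0 ≤ deriv φ c)
    (h2 : deriv (deriv φ) c ≤ 0) (x y : ℝ × ℝ) :
    2 * deriv (deriv φ) c * (x.1 ^ 2 + y.1 ^ 2) ≤ bondHessian φ c (x + y) := by
  have : 0 ≤ deriv φ c / c * (x + y).2 ^ 2 := by positivity
  simp only [bondHessian, Prod.fst_add] at this ⊢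
  nlinarith [mul_nonneg (neg_nonneg.2 h2) (sq_nonneg (x.1 - y.1))]

theorem min_mul_le_sum_bondHessian {φ : ℝ → ℝ} {N : ℕ} {ε F : ℝ} {a : ℤ → ℝ × ℝ}
    (ha : Function.Periodic a N) (hε : 0 ≤ ε) (hF : 0 < F) (h1 : 0 ≤ deriv φ (2 * F))
    (h2 : deriv (deriv φ) (2 * F) ≤ 0) :
    min (deriv (deriv φ) F + 4 * deriv (deriv φ) (2 * F)) (deriv φ F / F) *
        (ε * ∑ ℓ ∈ Icc (1 : ℤ) N, ((a ℓ).1 ^ 2 + (a ℓ).2 ^ 2)) ≤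
      ε * ∑ ℓ ∈ Icc (1 : ℤ) N,
        (bondHessian φ F (a ℓ) + bondHessian φ (2 * F) (a (ℓ + 1) + a ℓ)) := by
  set A₁ := ∑ ℓ ∈ Icc (1 : ℤ) N, (a ℓ).1 ^ 2
  set A₂ := ∑ ℓ ∈ Icc (1 : ℤ) N, (a ℓ).2 ^ 2
  have hA₁ : 0 ≤ A₁ := sum_nonneg fun _ _ => sq_nonneg _
  have hA₂ : 0 ≤ A₂ := sum_nonneg fun _ _ => sq_nonneg _
  have hshift : ∑ ℓ ∈ Icc (1 : ℤ) N, (a (ℓ + 1)).1 ^ 2 = A₁ :=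
    (ha.comp fun v => v.1 ^ 2).sum_Icc_add_one
  have hsplit : ∑ ℓ ∈ Icc (1 : ℤ) N, (bondHessian φ F (a ℓ) +
      2 * deriv (deriv φ) (2 * F) * ((a (ℓ + 1)).1 ^ 2 + (a ℓ).1 ^ 2)) =
      (deriv (deriv φ) F + 4 * deriv (deriv φ) (2 * F)) * A₁ + deriv φ F / F * A₂ := by
    simp only [bondHessian, sum_add_distrib, mul_add, ← mul_sum, hshift]
    ring
  calc _ = ε * (min (deriv (deriv φ) F + 4 * deriv (deriv φ) (2 * F)) (deriv φ F / F) * A₁ +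
        min (deriv (deriv φ) F + 4 * deriv (deriv φ) (2 * F)) (deriv φ F / F) * A₂) := by
        rw [sum_add_distrib]; ring
    _ ≤ ε * ((deriv (deriv φ) F + 4 * deriv (deriv φ) (2 * F)) * A₁ + deriv φ F / F * A₂) := by
        gcongr
        exacts [min_le_left _ _, min_le_right _ _]
    _ = ε * ∑ ℓ ∈ Icc (1 : ℤ) N, (bondHessian φ F (a ℓ) +
        2 * deriv (deriv φ) (2 * F) * ((a (ℓ + 1)).1 ^ 2 + (a ℓ).1 ^ 2)) := by rw [hsplit]
    _ ≤ _ := by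
        gcongr with ℓ
        exact bondHessian_add_ge (by positivity) h1 h2 _ _

lemma Function.Antiperiodic.bd {u : ℤ → ℝ × ℝ} (hu : Function.Antiperiodic u 1) (ε : ℝ) :
    Function.Antiperiodic (bd ε u) 1 := fun ℓ => by
  have h := hu (ℓ - 1)
  simp only [sub_add_cancel] at h
  simp only [_root_.bd, hu ℓ, add_sub_cancel_right, h, ← smul_neg]
  abel_nf

lemma Function.Antiperiodic.periodic_of_even {α β : Type*} [NonAssocSemiring α] [InvolutiveNeg β]
    {f : α → β} {c : α} (hf : Function.Antiperiodic f c) {n : ℕ} (hn : Even n) :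
    Function.Periodic f (n * c) := by
  obtain ⟨k, rfl⟩ := hn
  convert hf.nat_even_mul_periodic k using 1
  rw [Nat.cast_add, two_mul, mul_add, add_mul]

lemma Function.Antiperiodic.sum_Icc_eq_zero {M : Type*} [AddCommGroup M] [IsAddTorsionFree M]
    {f : ℤ → M} (hf : Function.Antiperiodic f 1) {N : ℕ} (hN : Even N) :
    ∑ ℓ ∈ Icc (1 : ℤ) N, f ℓ = 0 := by
  have hper : Function.Periodic f N := by simpa using hf.periodic_of_even hN
  refine self_eq_neg.mp ?_
  calc ∑ ℓ ∈ Icc (1 : ℤ) N, f ℓ = ∑ ℓ ∈ Icc (1 : ℤ) N, f (ℓ + 1) := hper.sum_Icc_add_one.symm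
    _ = ∑ ℓ ∈ Icc (1 : ℤ) N, -f ℓ := sum_congr rfl fun ℓ _ => hf ℓ
    _ = -∑ ℓ ∈ Icc (1 : ℤ) N, f ℓ := sum_neg_distrib _

lemma isDisp_of_antiperiodic {N : ℕ} (hN : Even N) {u : ℤ → ℝ × ℝ}
    (hu : Function.Antiperiodic u 1) : IsDisp N u :=
  ⟨by simpa using hu.periodic_of_even hN, hu.sum_Icc_eq_zero hN⟩

lemma sum_bondHessian_of_antiperiodic (φ : ℝ → ℝ) (N : ℕ) (F : ℝ) {a : ℤ → ℝ × ℝ}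
    (ha : Function.Antiperiodic a 1) (ha₁ : ∀ ℓ, (a ℓ).1 = 0) :
    ∑ ℓ ∈ Icc (1 : ℤ) N, (bondHessian φ F (a ℓ) + bondHessian φ (2 * F) (a (ℓ + 1) + a ℓ)) =
      deriv φ F / F * ∑ ℓ ∈ Icc (1 : ℤ) N, ((a ℓ).1 ^ 2 + (a ℓ).2 ^ 2) := by
  rw [mul_sum]
  refine sum_congr rfl fun ℓ _ => ?_
  simp [bondHessian, ha ℓ, ha₁]

theorem stmt_3 (N : ℕ) (hN : 4 ≤ N) (ε : ℝ) (hε : ε = (N : ℝ)⁻¹)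
    (φ : ℝ → ℝ) (hφ : ContDiffOn ℝ 2 φ (Set.Ioi 0)) (F : ℝ) (hF : 0 < F)
    (hφ1 : 0 ≤ deriv φ (2 * F)) (hφ2 : deriv (deriv φ) (2 * F) ≤ 0) :
    (∀ u : ℤ → ℝ × ℝ, IsDisp N u →
      d2E (Ea N ε φ) (yLin ε F) u u ≥
        min (deriv (deriv φ) F + 4 * deriv (deriv φ) (2 * F)) (deriv φ F / F) *
          (nrm N ε (bd ε u)) ^ 2) ∧
    (Even N → ∀ C : ℝ, 0 < C →
      IsDisp N (fun ℓ : ℤ => ((0 : ℝ), (-1 : ℝ) ^ ℓ * C)) ∧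
      d2E (Ea N ε φ) (yLin ε F)
          (fun ℓ : ℤ => ((0 : ℝ), (-1 : ℝ) ^ ℓ * C))
          (fun ℓ : ℤ => ((0 : ℝ), (-1 : ℝ) ^ ℓ * C)) =
        (deriv φ F / F) *
          (nrm N ε (bd ε (fun ℓ : ℤ => ((0 : ℝ), (-1 : ℝ) ^ ℓ * C)))) ^ 2) := by
  have hε0 : 0 < ε := by
    rw [hε]
    exact inv_pos.2 (by exact_mod_cast (by omega : 0 < N))
  refine ⟨fun u hu => ?_, fun hEven C _ => ?_⟩
  · rw [d2E_Ea_yLin N hε0.ne' hφ hF, nrm_sq N hε0.le]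
    exact min_mul_le_sum_bondHessian (Function.Periodic.bd hu.1 ε) hε0.le hF hφ1 hφ2
  · set w : ℤ → ℝ × ℝ := fun ℓ => ((0 : ℝ), (-1 : ℝ) ^ ℓ * C)
    have hw : Function.Antiperiodic w 1 := fun ℓ => by simp [w, zpow_add_one₀]
    refine ⟨isDisp_of_antiperiodic hEven hw, ?_⟩
    rw [d2E_Ea_yLin N hε0.ne' hφ hF, nrm_sq N hε0.le,
      sum_bondHessian_of_antiperiodic φ N F (hw.bd ε) fun ℓ => by simp [bd, w]]
    ring
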